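/- arXiv:0812.4206 — 7 statements merged into one kernel-verified Lean document; each statement's English description precedes it below -/
import Mathlib

section
/- Let f be a fractional matching of G. Then there exists a fractional matching f' of G with E(f') ⊆ E(f), equivalent to f, such that the subgraph G(E(f')) contains no cycle of even length. -/
open Finset
open scoped Classical

variable {V : Type*} [Fintype V] [DecidableEq V]

/-- The sum of `f` over the edges (elements of `Sym2 V`) containing the vertex `v`. -/
noncomputable def fracDeg (f : Sym2 V → ℝ) (v : V) : ℝ :=
  ∑ e ∈ Finset.univ.filter (fun e : Sym2 V => v ∈ e), f e

/-- `f` is a fractional matching of `G`. -/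
def IsFracMatching (G : SimpleGraph V) (f : Sym2 V → ℝ) : Prop :=
  (∀ e, 0 ≤ f e ∧ f e ≤ 1) ∧ (∀ e, e ∉ G.edgeSet → f e = 0) ∧ ∀ v, fracDeg f v ≤ 1

/-- `f` is a fractional perfect matching of `G`. -/
def IsFPM (G : SimpleGraph V) (f : Sym2 V → ℝ) : Prop :=
  (∀ e, 0 ≤ f e ∧ f e ≤ 1) ∧ (∀ e, e ∉ G.edgeSet → f e = 0) ∧ ∀ v, fracDeg f v = 1

/-- `E(f)`: the set of edges with positive weight. -/
noncomputable def fSupp (f : Sym2 V → ℝ) : Finset (Sym2 V) :=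
  Finset.univ.filter (fun e => 0 < f e)

/-- Number of edges of `F` containing `v` (the degree of `v` in the subgraph with edge set `F`). -/
noncomputable def edgeDeg (F : Finset (Sym2 V)) (v : V) : ℕ :=
  (F.filter (fun e => v ∈ e)).card

/-- The set of vertices incident to some edge of `F`. -/
noncomputable def vertSet (F : Finset (Sym2 V)) : Finset V :=
  Finset.univ.filter (fun v => ∃ e ∈ F, v ∈ e)

/-- Two edge-weight functions are equivalent: same incident sums at every vertex. -/
def Equiv' (f f' : Sym2 V → ℝ) : Prop := ∀ v : V, fracDeg f v = fracDeg f' v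

/-- `F` consists of a single edge. -/
def IsSingleEdge (F : Finset (Sym2 V)) : Prop := ∃ e : Sym2 V, F = {e}

/-- `F` is the edge set of an odd cycle. -/
def IsOddCycleSet (F : Finset (Sym2 V)) : Prop :=
  ∃ (v : V) (c : (SimpleGraph.fromEdgeSet (↑F : Set (Sym2 V))).Walk v v),
    c.IsCycle ∧ Odd c.length ∧ c.edges.toFinset = F

/-- Two edge sets are vertex-disjoint. -/
def VDisj (F F' : Finset (Sym2 V)) : Prop :=
  ∀ v : V, (∃ e ∈ F, v ∈ e) → ¬ ∃ e ∈ F', v ∈ e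

/-- Every connected component of the subgraph with edge set `F` (ignoring isolated
vertices) is either a single edge or an odd cycle, expressed via a partition of `F`
into pairwise vertex-disjoint such pieces. -/
def EdgesAndOddCycles (F : Finset (Sym2 V)) : Prop :=
  ∃ P : Finset (Finset (Sym2 V)),
    (∀ A ∈ P, IsSingleEdge A ∨ IsOddCycleSet A) ∧
    (∀ A ∈ P, ∀ B ∈ P, A ≠ B → VDisj A B) ∧
    P.biUnion id = F

/-- The family `P` witnesses that `f` is a `δ`-Partitionable fractional perfect matching. -/
def IsPartitionWitness (f : Sym2 V → ℝ) (δ : ℕ) (P : Fin δ → Finset (Sym2 V)) : Prop :=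
  (∀ j, (P j).Nonempty) ∧
  (∀ j k, j ≠ k → VDisj (P j) (P k)) ∧
  (∀ j, P j ⊆ fSupp f) ∧
  (∀ e ∈ fSupp f, ∃ j, e ∈ P j) ∧
  ∀ j, ∑ e ∈ P j, f e = (Fintype.card V : ℝ) / (2 * δ)

/-- `f` is `δ`-Partitionable. -/
def IsDeltaPartitionable (f : Sym2 V → ℝ) (δ : ℕ) : Prop :=
  ∃ P : Fin δ → Finset (Sym2 V), IsPartitionWitness f δ P

lemma walk_edges_getElem {G : SimpleGraph V} {u v : V} (p : G.Walk u v) :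
    ∀ i (hi : i < p.length),
      p.edges.get ⟨i, by simpa using hi⟩ = s(p.getVert i, p.getVert (i + 1)) := by
  induction p with
  | nil => intro i hi; simp at hi
  | cons h q ih =>
    intro i hi
    cases i with
    | zero => simp [SimpleGraph.Walk.getVert_cons_succ]
    | succ n =>
      have := ih n (by simpa using hi)
      simpa [SimpleGraph.Walk.getVert_cons_succ] using this

lemma shrink {G : SimpleGraph V} {g : Sym2 V → ℝ} (hg : IsFracMatching G g)
    {v : V} (c : (SimpleGraph.fromEdgeSet (↑(fSupp g) : Set (Sym2 V))).Walk v v)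
    (hc : c.IsCycle) (hev : Even c.length) :
    ∃ g', IsFracMatching G g' ∧ fSupp g' ⊆ fSupp g ∧ Equiv' g g' ∧
      (fSupp g').card < (fSupp g).card := by
  obtain ⟨hg1, hg2, hg3⟩ := hg
  set n := c.length with hn
  have hn3 : 3 ≤ n := hc.three_le_length
  set u : ℕ → V := fun i => c.getVert i with hu
  set ed : ℕ → Sym2 V := fun i => s(u i, u (i + 1)) with hed
  have hadj : ∀ i < n, (SimpleGraph.fromEdgeSet (↑(fSupp g) : Set (Sym2 V))).Adj (u i) (u (i+1)) :=
    fun i hi => c.adj_getVert_succ hi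
  have hmem : ∀ i < n, ed i ∈ fSupp g := by
    intro i hi
    have := (SimpleGraph.fromEdgeSet_adj _ |>.1 (hadj i hi)).1
    simpa using this
  have hneq : ∀ i < n, u i ≠ u (i + 1) := fun i hi =>
    (SimpleGraph.fromEdgeSet_adj _ |>.1 (hadj i hi)).2
  have hpos : ∀ i < n, 0 < g (ed i) := by
    intro i hi
    have := hmem i hi
    simpa [fSupp] using this
  have edinj : ∀ i < n, ∀ j < n, ed i = ed j → i = j := by
    intro i hi j hj hij
    have hnd : c.edges.Nodup := hc.edges_nodup
    have h1 := walk_edges_getElem c i hi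
    have h2 := walk_edges_getElem c j hj
    have : c.edges.get ⟨i, by simpa using hi⟩ = c.edges.get ⟨j, by simpa using hj⟩ := by
      rw [h1, h2]; exact hij
    have := (hnd.get_inj_iff).1 this
    exact congrArg Fin.val this
  -- choose the minimizing odd-indexed edge
  set T : Finset ℕ := (Finset.range n).filter (fun i => Odd i) with hT
  have hTne : T.Nonempty := ⟨1, by simp [hT]; omega⟩
  obtain ⟨j₀, hj₀T, hj₀min⟩ := T.exists_min_image (fun i => g (ed i)) hTne
  have hj₀n : j₀ < n := by simp [hT] at hj₀T; exact hj₀T.1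
  have hj₀odd : Odd j₀ := by simp [hT] at hj₀T; exact hj₀T.2
  set ε : ℝ := g (ed j₀) with hε
  have hεpos : 0 < ε := hpos j₀ hj₀n
  have hεmin : ∀ j < n, Odd j → ε ≤ g (ed j) := by
    intro j hj hodd
    exact hj₀min j (by simp [hT]; exact ⟨hj, hodd⟩)
  set h : Sym2 V → ℝ := fun e => ∑ i ∈ Finset.range n, if e = ed i then (-1 : ℝ)^i else 0
    with hhdef
  set g' : Sym2 V → ℝ := fun e => g e + ε * h e with hg'
  have hval : ∀ j < n, h (ed j) = (-1 : ℝ)^j := by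
    intro j hj
    simp only [hhdef]
    rw [Finset.sum_eq_single_of_mem j (Finset.mem_range.2 hj)]
    · simp
    · intro i hi hij
      have : ed j ≠ ed i := fun hh => hij (edinj j hj i (Finset.mem_range.1 hi) hh).symm
      simp [this]
  have hzero : ∀ e : Sym2 V, (∀ i < n, e ≠ ed i) → h e = 0 := by
    intro e he
    simp only [hhdef]
    apply Finset.sum_eq_zero
    intro i hi
    simp [he i (Finset.mem_range.1 hi)]
  -- bound: for even j, g (ed j) + ε ≤ 1
  have hpairle : ∀ j < n, Even j → g (ed j) + ε ≤ 1 := by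
    intro j hj hje
    have hj1 : j + 1 < n := by
      rcases Nat.lt_or_ge (j+1) n with h' | h'
      · exact h'
      · exfalso
        have : j + 1 = n := by omega
        rw [← this] at hev
        exact (Nat.even_add_one.1 hev) hje
    have hodd : Odd (j + 1) := Even.add_one hje
    have hne2 : ed j ≠ ed (j + 1) := by
      intro hh; have := edinj j hj (j+1) hj1 hh; omega
    have hmem1 : u (j+1) ∈ ed j := by simp [hed, Sym2.mem_iff]
    have hmem2 : u (j+1) ∈ ed (j+1) := by simp [hed, Sym2.mem_iff]
    have hsub : ({ed j, ed (j+1)} : Finset (Sym2 V)) ⊆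
        Finset.univ.filter (fun e : Sym2 V => u (j+1) ∈ e) := by
      intro e he
      simp only [Finset.mem_insert, Finset.mem_singleton] at he
      rcases he with rfl | rfl <;> simp [hmem1, hmem2]
    have hsum : g (ed j) + g (ed (j+1)) ≤ fracDeg g (u (j+1)) := by
      have := Finset.sum_le_sum_of_subset_of_nonneg hsub
        (fun e _ _ => (hg1 e).1)
      rw [Finset.sum_pair hne2] at this
      exact this
    have := hg3 (u (j+1))
    have hε2 : ε ≤ g (ed (j+1)) := hεmin (j+1) hj1 hodd
    linarith
  -- value of g' on cycle edges
  have hvg' : ∀ j < n, g' (ed j) = g (ed j) + ε * (-1:ℝ)^j := by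
    intro j hj; simp only [hg']; simp [hval j hj]
  -- g' bounds
  have hb : ∀ e, 0 ≤ g' e ∧ g' e ≤ 1 := by
    intro e
    by_cases hce : ∃ j < n, e = ed j
    · obtain ⟨j, hj, rfl⟩ := hce
      rw [hvg' j hj]
      rcases Nat.even_or_odd j with hje | hjo
      · have := hpairle j hj hje
        rw [hje.neg_one_pow]
        constructor
        · nlinarith [(hg1 (ed j)).1, hεpos]
        · linarith
      · rw [hjo.neg_one_pow]
        have := hεmin j hj hjo
        constructor
        · linarith
        · have := (hg1 (ed j)).2; linarith
    · push_neg at hce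
      have : h e = 0 := hzero e hce
      simp only [hg', this]
      simpa using hg1 e
  -- support inclusion and strict decrease
  have hsupp : fSupp g' ⊆ fSupp g := by
    intro e he
    simp only [fSupp, Finset.mem_filter, Finset.mem_univ, true_and] at he ⊢
    by_cases hce : ∃ j < n, e = ed j
    · obtain ⟨j, hj, rfl⟩ := hce
      exact hpos j hj
    · push_neg at hce
      have : h e = 0 := hzero e hce
      simp only [hg', this] at he
      simpa using he
  have hj₀out : ed j₀ ∉ fSupp g' := by
    simp only [fSupp, Finset.mem_filter, Finset.mem_univ, true_and, not_lt]
    rw [hvg' j₀ hj₀n, hj₀odd.neg_one_pow]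
    simp [hε]
  have hcard : (fSupp g').card < (fSupp g).card :=
    Finset.card_lt_card ⟨hsupp, fun hcon => hj₀out (hcon (hmem j₀ hj₀n))⟩
  -- degree preservation
  have hdeg : ∀ w : V, fracDeg g w = fracDeg g' w := by
    intro w
    have hsplit : fracDeg g' w = fracDeg g w +
        ε * ∑ e ∈ Finset.univ.filter (fun e : Sym2 V => w ∈ e), h e := by
      unfold fracDeg
      rw [Finset.mul_sum, ← Finset.sum_add_distrib]
    rw [hsplit]
    have hhsum : ∑ e ∈ Finset.univ.filter (fun e : Sym2 V => w ∈ e), h e = 0 := by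
      simp only [hhdef]
      rw [Finset.sum_comm]
      have hinner : ∀ i ∈ Finset.range n,
          (∑ e ∈ Finset.univ.filter (fun e : Sym2 V => w ∈ e),
            if e = ed i then (-1:ℝ)^i else 0)
          = (if w ∈ ed i then (-1:ℝ)^i else 0) := by
        intro i _
        rw [Finset.sum_ite_eq' (Finset.univ.filter (fun e : Sym2 V => w ∈ e)) (ed i)
          (fun _ => (-1:ℝ)^i)]
        simp
      rw [Finset.sum_congr rfl hinner]
      set a : ℕ → ℝ := fun i => if u i = w then 1 else 0 with ha
      have hterm : ∀ i ∈ Finset.range n,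
          (if w ∈ ed i then (-1:ℝ)^i else 0) = (-1:ℝ)^i * a i - (-1:ℝ)^(i+1) * a (i+1) := by
        intro i hi
        have hiu : u i ≠ u (i+1) := hneq i (Finset.mem_range.1 hi)
        have hmemiff : w ∈ ed i ↔ u i = w ∨ u (i+1) = w := by
          simp [hed, Sym2.mem_iff, eq_comm]
        by_cases h1 : u i = w <;> by_cases h2 : u (i+1) = w
        · exact absurd (h1.trans h2.symm) hiu
        · simp [ha, h1, h2, hmemiff, pow_succ]
        · simp [ha, h1, h2, hmemiff, pow_succ]
        · simp [ha, h1, h2, hmemiff]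
      rw [Finset.sum_congr rfl hterm, Finset.sum_range_sub' (fun i => (-1:ℝ)^i * a i)]
      have h0 : u 0 = v := c.getVert_zero
      have hnn : u n = v := c.getVert_length
      rw [hev.neg_one_pow]
      simp [ha, h0, hnn]
    rw [hhsum]
    ring
  refine ⟨g', ⟨hb, ?_, fun w => (hdeg w).symm ▸ hg3 w⟩, hsupp, hdeg, hcard⟩
  · intro e he
    have hge : g e = 0 := hg2 e he
    have hce : ∀ i < n, e ≠ ed i := by
      intro i hi hcon
      have := hpos i hi
      rw [← hcon, hge] at this
      exact lt_irrefl 0 this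
    simp only [hg', hzero e hce, hge]
    ring

/-- every fractional matching `f` has an equivalent fractional matching
`f'` with `E(f') ⊆ E(f)` such that the subgraph `G(E(f'))` contains no even cycle. -/
theorem exists_equiv_no_even_cycle (G : SimpleGraph V) (hG : ∀ v : V, ∃ u, G.Adj u v)
    (f : Sym2 V → ℝ) (hf : IsFracMatching G f) :
    ∃ f' : Sym2 V → ℝ, IsFracMatching G f' ∧ fSupp f' ⊆ fSupp f ∧ Equiv' f f' ∧
      ∀ (v : V) (c : (SimpleGraph.fromEdgeSet (↑(fSupp f') : Set (Sym2 V))).Walk v v),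
        c.IsCycle → ¬ Even c.length := by
  suffices H : ∀ N : ℕ, ∀ g : Sym2 V → ℝ, (fSupp g).card = N → IsFracMatching G g →
      fSupp g ⊆ fSupp f → Equiv' f g →
      ∃ f' : Sym2 V → ℝ, IsFracMatching G f' ∧ fSupp f' ⊆ fSupp f ∧ Equiv' f f' ∧
        ∀ (v : V) (c : (SimpleGraph.fromEdgeSet (↑(fSupp f') : Set (Sym2 V))).Walk v v),
          c.IsCycle → ¬ Even c.length by
    exact H (fSupp f).card f rfl hf (Finset.Subset.refl _) (fun v => rfl)
  intro N
  induction N using Nat.strong_induction_on with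
  | _ N ih =>
    intro g hcard hgm hsub hequiv
    by_cases hcyc : ∃ (v : V) (c : (SimpleGraph.fromEdgeSet
        (↑(fSupp g) : Set (Sym2 V))).Walk v v), c.IsCycle ∧ Even c.length
    · obtain ⟨v, c, hc, he⟩ := hcyc
      obtain ⟨g', h1, h2, h3, h4⟩ := shrink hgm c hc he
      exact ih (fSupp g').card (hcard ▸ h4) g' rfl h1 (h2.trans hsub)
        (fun w => (hequiv w).trans (h3 w))
    · push_neg at hcyc
      exact ⟨g, hgm, hsub, hequiv, fun v c hc he => hcyc v c hc he⟩
end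

section
/- Let f be a fractional perfect matching of G. Then there exists a fractional perfect matching f' of G with E(f') ⊆ E(f), equivalent to f, such that every connected component of the subgraph G(E(f')) (after deleting isolated vertices) is either a single edge or an odd cycle. -/
/-!
Among the fractional perfect matchings equivalent to `f` with support inside `E(f)`, take one,
`h`, of minimal support. That support is rigid: a nonzero weighting `g` on it with all vertex
sums zero would let us move `h` along `g` until some edge drops out.

An edge of weight `1` meets no other edge of the support. The edges of weight in `(0, 1)` form a
graph in which no vertex has degree `1`, and by rigidity it has at most as many edges as
non-isolated vertices; so it is `2`-regular, i.e. a disjoint union of cycles. An even cycle would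
carry the balanced weighting `±1` alternately, so all these cycles are odd.
-/

open Finset
open scoped Classical

variable {V : Type*} [Fintype V] [DecidableEq V]

set_option linter.unusedSectionVars false

open SimpleGraph

variable {G : SimpleGraph V} {f g : Sym2 V → ℝ} {e e' : Sym2 V} {v : V}

lemma mem_fSupp : e ∈ fSupp f ↔ 0 < f e := by
  simp [fSupp]

lemma mem_vertSet {F : Finset (Sym2 V)} : v ∈ vertSet F ↔ ∃ e ∈ F, v ∈ e := by
  simp [vertSet]

noncomputable def fracDegHom : (Sym2 V → ℝ) →ₗ[ℝ] V → ℝ :=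
  LinearMap.pi fun v => ∑ e ∈ univ.filter (v ∈ ·), LinearMap.proj e

@[simp]
lemma fracDegHom_apply (f : Sym2 V → ℝ) (v : V) : fracDegHom f v = fracDeg f v := by
  simp [fracDegHom, fracDeg]

lemma fracDeg_add_smul (f g : Sym2 V → ℝ) (t : ℝ) (v : V) :
    fracDeg (f + t • g) v = fracDeg f v + t * fracDeg g v := by
  simp [← fracDegHom_apply]

lemma le_fracDeg (hf : ∀ e, 0 ≤ f e) (hv : v ∈ e) : f e ≤ fracDeg f v :=
  single_le_sum (fun e _ => hf e) (by simpa using hv)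

lemma isFPM_of_nonneg (hnn : ∀ e, 0 ≤ f e) (hG : ∀ e ∉ G.edgeSet, f e = 0)
    (hdeg : ∀ v, fracDeg f v = 1) : IsFPM G f :=
  ⟨fun e => ⟨hnn e, hdeg _ ▸ le_fracDeg hnn (Sym2.out_fst_mem e)⟩, hG, hdeg⟩

namespace IsFPM

lemma eq_zero_of_notMem_fSupp (hf : IsFPM G f) (he : e ∉ fSupp f) : f e = 0 :=
  le_antisymm (not_lt.mp (mt mem_fSupp.mpr he)) (hf.1 e).1

lemma mem_edgeSet_of_mem_fSupp (hf : IsFPM G f) (he : e ∈ fSupp f) : e ∈ G.edgeSet := by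
  by_contra hG
  exact (mem_fSupp.mp he).ne' (hf.2.1 e hG)

lemma eq_of_eq_one (hf : IsFPM G f) (he : f e = 1) (he' : 0 < f e') (hv : v ∈ e)
    (hv' : v ∈ e') : e' = e := by
  by_contra hne
  have hsub : {e, e'} ⊆ univ.filter (v ∈ ·) := by simp [insert_subset_iff, hv, hv']
  have := sum_le_sum_of_subset_of_nonneg hsub fun e _ _ => (hf.1 e).1
  rw [sum_pair (Ne.symm hne), ← fracDeg, hf.2.2 v] at this
  linarith

lemma exists_ne_mem_fSupp (hf : IsFPM G f) (hv : v ∈ e) (he : f e < 1) :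
    ∃ e' ∈ fSupp f, e' ≠ e ∧ v ∈ e' := by
  by_contra! hcon
  have : fracDeg f v = f e :=
    sum_eq_single e (fun e' he' hne => hf.eq_zero_of_notMem_fSupp
      fun hs => hcon e' hs hne (by simpa using he')) (by simp [hv])
  linarith [hf.2.2 v]

end IsFPM

/-- The columns of the incidence matrix indexed by `F` are linearly independent. -/
def IsRigid (F : Finset (Sym2 V)) : Prop :=
  ∀ g : Sym2 V → ℝ, (∀ e ∉ F, g e = 0) → (∀ v, fracDeg g v = 0) → g = 0

lemma IsRigid.subset {F F' : Finset (Sym2 V)} (hF : IsRigid F) (hF' : F' ⊆ F) : IsRigid F' :=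
  fun g hg => hF g fun e he => hg e (mt (@hF' e) he)

lemma exists_neg_of_not_isRigid {F : Finset (Sym2 V)} (hF : ¬ IsRigid F) :
    ∃ g : Sym2 V → ℝ, (∀ e ∉ F, g e = 0) ∧ (∀ v, fracDeg g v = 0) ∧ ∃ e, g e < 0 := by
  simp only [IsRigid, not_forall] at hF
  obtain ⟨g, hg0, hgd, hg⟩ := hF
  obtain ⟨e, he⟩ := Function.ne_iff.mp hg
  rcases he.lt_or_gt with hneg | hpos
  · exact ⟨g, hg0, hgd, e, hneg⟩
  · refine ⟨-g, fun e he => by simp [hg0 e he], fun v => ?_, e, by simpa using hpos⟩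
    simpa [← fracDegHom_apply] using hgd v

/-- Move `f` along `g` until the first edge vanishes; the bounds `≤ 1` take care of themselves
because the vertex sums stay `1`. -/
lemma IsFPM.exists_equiv_fSupp_ssubset (hf : IsFPM G f) (hg0 : ∀ e ∉ fSupp f, g e = 0)
    (hgd : ∀ v, fracDeg g v = 0) (hneg : ∃ e, g e < 0) :
    ∃ f', IsFPM G f' ∧ Equiv' f f' ∧ fSupp f' ⊂ fSupp f := by
  obtain ⟨e₀, he₀, hmin⟩ :=
    (univ.filter (g · < 0)).exists_min_image (fun e => f e / -g e)
      (by simpa [Finset.Nonempty] using hneg)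
  simp only [mem_filter, mem_univ, true_and] at he₀ hmin
  set t := f e₀ / -g e₀
  have hdeg : ∀ v, fracDeg (f + t • g) v = 1 := by simp [fracDeg_add_smul, hgd, hf.2.2]
  have hnn : ∀ e, 0 ≤ (f + t • g) e := by
    intro e
    have hfe := (hf.1 e).1
    rcases lt_or_ge (g e) 0 with hge | hge
    · have := (le_div_iff₀ (neg_pos.mpr hge)).mp (hmin e hge)
      simp only [Pi.add_apply, Pi.smul_apply, smul_eq_mul]
      linarith
    · have : 0 ≤ t := div_nonneg (hf.1 e₀).1 (neg_nonneg.mpr he₀.le)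
      simp only [Pi.add_apply, Pi.smul_apply, smul_eq_mul]
      nlinarith
  have hzero : ∀ e ∉ fSupp f, (f + t • g) e = 0 := fun e he => by
    simp [hf.eq_zero_of_notMem_fSupp he, hg0 e he]
  have he₀f : e₀ ∈ fSupp f := by_contra fun h => he₀.ne (hg0 e₀ h)
  refine ⟨f + t • g, isFPM_of_nonneg hnn
    (fun e he => hzero e fun hs => he (hf.mem_edgeSet_of_mem_fSupp hs)) hdeg,
    fun v => by rw [hf.2.2 v, hdeg v], (ssubset_iff_of_subset ?_).mpr ⟨e₀, he₀f, ?_⟩⟩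
  · intro e he
    by_contra hs
    simp [mem_fSupp, hzero e hs] at he
  · simp only [mem_fSupp, Pi.add_apply, Pi.smul_apply, smul_eq_mul, t]
    rw [div_mul_eq_mul_div, div_neg, mul_div_assoc, div_self he₀.ne]
    simp

theorem IsFPM.exists_equiv_isRigid (hf : IsFPM G f) :
    ∃ h, IsFPM G h ∧ fSupp h ⊆ fSupp f ∧ Equiv' f h ∧ IsRigid (fSupp h) := by
  induction hn : #(fSupp f) using Nat.strong_induction_on generalizing f with
  | _ n ih =>
  by_cases hr : IsRigid (fSupp f)
  · exact ⟨f, hf, subset_rfl, fun _ => rfl, hr⟩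
  obtain ⟨g, hg0, hgd, hneg⟩ := exists_neg_of_not_isRigid hr
  obtain ⟨f', hf', hff', hss⟩ := hf.exists_equiv_fSupp_ssubset hg0 hgd hneg
  obtain ⟨h, hh, hsub, hf'h, hrig⟩ := ih _ (hn ▸ card_lt_card hss) hf' rfl
  exact ⟨h, hh, hsub.trans hss.subset, fun v => (hff' v).trans (hf'h v), hrig⟩

namespace SimpleGraph.Walk

/-- The signed count `∑ᵢ (-1)ⁱ [e = eᵢ]` of the edges `e₀, e₁, …` of a walk. -/
noncomputable def altIndicator : ∀ {u w : V}, G.Walk u w → Sym2 V → ℝ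
  | _, _, nil => 0
  | u, _, cons (v := x) _ p => Pi.single s(u, x) 1 - p.altIndicator

lemma fracDeg_altIndicator {u w : V} (p : G.Walk u w) (v : V) :
    fracDeg p.altIndicator v =
      (if v = u then 1 else 0) - (-1) ^ p.length * (if v = w then 1 else 0) := by
  induction p with
  | nil => simp [altIndicator, fracDeg]
  | @cons u x w hadj p ih =>
    have hsingle : fracDeg (Pi.single s(u, x) 1) v =
        (if v = u then 1 else 0) + (if v = x then 1 else 0) := by
      rw [fracDeg, sum_pi_single']
      rcases eq_or_ne v u with rfl | hvu
      · simp [hadj.ne]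
      · simp [hvu]
    rw [altIndicator, ← fracDegHom_apply, map_sub, Pi.sub_apply, fracDegHom_apply,
      fracDegHom_apply, hsingle, ih, length_cons, pow_succ]
    ring

lemma altIndicator_eq_zero_of_notMem {u w : V} (p : G.Walk u w) {e : Sym2 V}
    (he : e ∉ p.edges) : p.altIndicator e = 0 := by
  induction p with
  | nil => rfl
  | cons hadj p ih =>
    simp only [edges_cons, List.mem_cons, not_or] at he
    simp [altIndicator, he.1, ih he.2]

lemma IsTrail.altIndicator_ne_zero {u w : V} {p : G.Walk u w} (hp : p.IsTrail)
    (hnil : ¬ p.Nil) : p.altIndicator ≠ 0 := by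
  cases p with
  | nil => exact absurd Nil.nil hnil
  | @cons u x w hadj q =>
    intro h0
    have := congrFun h0 s(u, x)
    rw [altIndicator, Pi.sub_apply, altIndicator_eq_zero_of_notMem q
      ((isTrail_cons _ _).mp hp).2] at this
    simp at this

end SimpleGraph.Walk

lemma IsRigid.odd_length_of_isCycle {F : Finset (Sym2 V)} (hF : IsRigid F) {u : V}
    {c : G.Walk u u} (hc : c.IsCycle) (hcF : ∀ e ∈ c.edges, e ∈ F) : Odd c.length := by
  by_contra heven
  rw [Nat.not_odd_iff_even] at heven
  refine hc.isTrail.altIndicator_ne_zero hc.not_nil (hF _ ?_ fun v => ?_)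
  · exact fun e he => c.altIndicator_eq_zero_of_notMem (mt (hcF e) he)
  · rw [c.fracDeg_altIndicator, heven.neg_one_pow]
    ring

/-- Rigidity makes `g ↦ (fracDeg g v)_{v ∈ vertSet A}` injective on weightings supported
on `A`. -/
lemma IsRigid.card_le_card_vertSet {A : Finset (Sym2 V)} (hA : IsRigid A) :
    #A ≤ #(vertSet A) := by
  let T : (A → ℝ) →ₗ[ℝ] vertSet A → ℝ := LinearMap.funLeft ℝ ℝ Subtype.val ∘ₗ fracDegHom ∘ₗ
    Function.ExtendByZero.linearMap ℝ (Subtype.val : A → Sym2 V)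
  have hT : Function.Injective T := by
    rw [← LinearMap.ker_eq_bot, LinearMap.ker_eq_bot']
    intro g hg
    set g' := Function.ExtendByZero.linearMap ℝ (Subtype.val : A → Sym2 V) g
    have hg'0 : ∀ e ∉ A, g' e = 0 := fun e he =>
      Function.extend_apply' _ _ _ fun ⟨a, ha⟩ => he (ha ▸ a.2)
    have hg'd : ∀ v, fracDeg g' v = 0 := by
      intro v
      by_cases hv : v ∈ vertSet A
      · simpa [T] using congrFun hg ⟨v, hv⟩
      · exact sum_eq_zero fun e he =>
          hg'0 e fun heA => hv (mem_vertSet.mpr ⟨e, heA, by simpa using he⟩)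
    funext a
    simpa [g'] using congrFun (hA g' hg'0 hg'd) a
  simpa using LinearMap.finrank_le_finrank_of_injective hT

namespace SimpleGraph

variable {H : SimpleGraph V} [DecidableRel H.Adj]

/-- By the handshake lemma, `2 * #S ≤ ∑ v ∈ S, H.degree v = 2 * #E ≤ 2 * #S`, so every degree on
the non-isolated vertices `S` is `2`. -/
lemma isCycles_of_card_edgeFinset_le (hdeg : ∀ v, 0 < H.degree v → 2 ≤ H.degree v)
    (hcard : #H.edgeFinset ≤ #(univ.filter fun v => 0 < H.degree v)) : H.IsCycles := by
  set S := univ.filter fun v => 0 < H.degree v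
  have hsum : ∑ v ∈ S, H.degree v = 2 * #H.edgeFinset := by
    rw [← sum_degrees_eq_twice_card_edges,
      sum_filter_of_ne fun v _ hv => Nat.pos_of_ne_zero hv]
  have hle : ∀ v ∈ S, 2 ≤ H.degree v := fun v hv => hdeg v (mem_filter.mp hv).2
  have heq := (sum_eq_sum_iff_of_le hle).mp
    (le_antisymm (sum_le_sum hle) (by rw [hsum, sum_const, smul_eq_mul]; omega))
  intro v hv
  rw [← Nat.card_coe_set_eq, Nat.card_eq_fintype_card, card_neighborSet_eq_degree]
  exact (heq v (by simpa [S] using degree_pos_iff_nonempty.mpr hv)).symm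

lemma vertSet_edgeFinset :
    vertSet H.edgeFinset = univ.filter fun v => 0 < H.degree v := by
  ext v
  simp only [mem_vertSet, mem_filter, mem_univ, true_and, H.degree_pos_iff_exists_adj,
    mem_edgeFinset]
  constructor
  · rintro ⟨e, he, hv⟩
    obtain ⟨w, rfl⟩ := Sym2.mem_iff_exists.mp hv
    exact ⟨w, he⟩
  · rintro ⟨w, hw⟩
    exact ⟨s(v, w), hw, Sym2.mem_mk_left v w⟩

noncomputable def componentEdges (H : SimpleGraph V) [DecidableRel H.Adj] (v : V) :
    Finset (Sym2 V) :=
  H.edgeFinset.filter fun e => ∀ w ∈ e, H.Reachable v w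

lemma componentEdges_eq_of_reachable {v w : V} (hvw : H.Reachable v w) :
    H.componentEdges v = H.componentEdges w := by
  ext e
  simp only [componentEdges, mem_filter]
  exact and_congr_right fun _ =>
    forall₂_congr fun x _ => ⟨hvw.symm.trans, hvw.trans⟩

lemma IsCycles.exists_isCycle_edges_eq (hH : H.IsCycles) {v : V}
    (hv : (H.neighborSet v).Nonempty) :
    ∃ c : H.Walk v v, c.IsCycle ∧ c.edges.toFinset = H.componentEdges v := by
  obtain ⟨c, hc, hverts⟩ :=
    hH.exists_cycle_toSubgraph_verts_eq_connectedComponentSupp (c := H.connectedComponentMk v)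
      rfl hv
  have hmem : ∀ w, w ∈ c.support ↔ H.Reachable v w := fun w => by
    rw [← c.mem_verts_toSubgraph, hverts, ConnectedComponent.mem_supp_iff,
      ConnectedComponent.eq, reachable_comm]
  refine ⟨c, hc, ?_⟩
  ext e
  induction e using Sym2.ind with
  | _ a b =>
  simp only [List.mem_toFinset, componentEdges, mem_filter, mem_edgeFinset, mem_edgeSet,
    Sym2.mem_iff, forall_eq_or_imp, forall_eq]
  constructor
  · intro he
    exact ⟨c.adj_of_mem_edges he, (hmem a).mp (c.fst_mem_support_of_mem_edges he),
      (hmem b).mp (c.snd_mem_support_of_mem_edges he)⟩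
  · rintro ⟨hab, ha, -⟩
    rw [← Walk.adj_toSubgraph_iff_mem_edges, hc.adj_toSubgraph_iff_of_isCycles hH
      (c.mem_verts_toSubgraph.mpr ((hmem a).mpr ha))]
    exact hab

end SimpleGraph

lemma isOddCycleSet_edges_toFinset {K : SimpleGraph V} {u : V} {c : K.Walk u u}
    (hc : c.IsCycle) (hodd : Odd c.length) : IsOddCycleSet c.edges.toFinset := by
  have hce : ∀ e ∈ c.edges, e ∈ (fromEdgeSet (↑c.edges.toFinset : Set (Sym2 V))).edgeSet :=
    fun e he => by
      rw [edgeSet_fromEdgeSet]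
      exact ⟨by simpa using he, K.not_isDiag_of_mem_edgeSet (c.edges_subset_edgeSet he)⟩
  exact ⟨u, c.transfer _ hce, hc.transfer hce, by rwa [Walk.length_transfer],
    by rw [Walk.edges_transfer]⟩

namespace SimpleGraph

variable {H : SimpleGraph V} [DecidableRel H.Adj] {F : Finset (Sym2 V)}

noncomputable def edgePartition (H : SimpleGraph V) [DecidableRel H.Adj] (F : Finset (Sym2 V)) :
    Finset (Finset (Sym2 V)) :=
  (F.filter (· ∉ H.edgeSet)).image ({·}) ∪
    (univ.filter fun v => (H.neighborSet v).Nonempty).image H.componentEdges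

lemma mem_edgePartition {A : Finset (Sym2 V)} : A ∈ H.edgePartition F ↔
    (∃ e ∈ F, e ∉ H.edgeSet ∧ A = {e}) ∨
      ∃ v, (H.neighborSet v).Nonempty ∧ A = H.componentEdges v := by
  simp only [edgePartition, mem_union, mem_image, mem_filter, mem_univ, true_and, and_assoc,
    eq_comm (b := A)]

lemma subset_of_mem_edgePartition (hHF : H.edgeFinset ⊆ F) {A : Finset (Sym2 V)}
    (hA : A ∈ H.edgePartition F) : A ⊆ F := by
  rcases mem_edgePartition.mp hA with ⟨e, he, -, rfl⟩ | ⟨v, -, rfl⟩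
  · exact singleton_subset_iff.mpr he
  · exact (filter_subset _ _).trans hHF

lemma eq_of_mem_edgePartition {A : Finset (Sym2 V)} (hA : A ∈ H.edgePartition F) {e : Sym2 V}
    (he : e ∈ A) {x : V} (hx : x ∈ e) :
    A = if e ∈ H.edgeSet then H.componentEdges x else {e} := by
  rcases mem_edgePartition.mp hA with ⟨e₀, -, he₀, rfl⟩ | ⟨v, -, rfl⟩
  · rw [mem_singleton.mp he, if_neg he₀]
  · simp only [componentEdges, mem_filter, mem_edgeFinset] at he
    rw [if_pos he.1]
    exact componentEdges_eq_of_reachable (he.2 x hx)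

lemma biUnion_edgePartition (hHF : H.edgeFinset ⊆ F) : (H.edgePartition F).biUnion id = F := by
  ext e
  simp only [mem_biUnion, id]
  refine ⟨fun ⟨A, hA, he⟩ => subset_of_mem_edgePartition hHF hA he, fun he => ?_⟩
  by_cases h : e ∈ H.edgeSet
  · induction e using Sym2.ind with
    | _ a b =>
    refine ⟨H.componentEdges a, mem_edgePartition.mpr (Or.inr ⟨a, ⟨b, h⟩, rfl⟩), ?_⟩
    simp only [componentEdges, mem_filter, mem_edgeFinset, Sym2.mem_iff, forall_eq_or_imp,
      forall_eq]
    exact ⟨h, Reachable.refl a, h.reachable⟩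
  · exact ⟨{e}, mem_edgePartition.mpr (Or.inl ⟨e, he, h, rfl⟩), mem_singleton_self e⟩

lemma edgesAndOddCycles_of_isCycles (hHF : H.edgeFinset ⊆ F)
    (hiso : ∀ e ∈ F, e ∉ H.edgeSet → ∀ e' ∈ F, ∀ v ∈ e, v ∈ e' → e' = e)
    (hH : H.IsCycles) (hodd : ∀ u (c : H.Walk u u), c.IsCycle → Odd c.length) :
    EdgesAndOddCycles F := by
  refine ⟨H.edgePartition F, fun A hA => ?_, ?_, biUnion_edgePartition hHF⟩
  · rcases mem_edgePartition.mp hA with ⟨e, -, -, rfl⟩ | ⟨v, hv, rfl⟩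
    · exact Or.inl ⟨e, rfl⟩
    · obtain ⟨c, hc, hce⟩ := hH.exists_isCycle_edges_eq hv
      exact Or.inr (hce ▸ isOddCycleSet_edges_toFinset hc (hodd v c hc))
  · rintro A hA B hB hAB x ⟨e, he, hx⟩ ⟨e', he', hx'⟩
    refine hAB ((eq_of_mem_edgePartition hA he hx).trans
      (Eq.trans ?_ (eq_of_mem_edgePartition hB he' hx').symm))
    have heF := subset_of_mem_edgePartition hHF hA he
    have he'F := subset_of_mem_edgePartition hHF hB he'
    by_cases h : e ∈ H.edgeSet <;> by_cases h' : e' ∈ H.edgeSet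
    · simp [h, h']
    · exact absurd (hiso e' he'F h' e heF x hx' hx ▸ h) h'
    · exact absurd (hiso e heF h e' he'F x hx hx' ▸ h') h
    · rw [hiso e heF h e' he'F x hx hx']

end SimpleGraph

def fractionalGraph (f : Sym2 V → ℝ) : SimpleGraph V :=
  fromEdgeSet {e | 0 < f e ∧ f e < 1}

lemma fractionalGraph_adj {u w : V} :
    (fractionalGraph f).Adj u w ↔ (0 < f s(u, w) ∧ f s(u, w) < 1) ∧ u ≠ w :=
  fromEdgeSet_adj _

lemma IsFPM.mem_edgeSet_fractionalGraph (hf : IsFPM G f) (he : e ∈ fSupp f) :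
    e ∈ (fractionalGraph f).edgeSet ↔ f e < 1 := by
  simp [fractionalGraph, mem_fSupp.mp he,
    G.not_isDiag_of_mem_edgeSet (hf.mem_edgeSet_of_mem_fSupp he)]

lemma IsFPM.two_le_degree_fractionalGraph (hf : IsFPM G f) {v : V}
    (hv : 0 < (fractionalGraph f).degree v) : 2 ≤ (fractionalGraph f).degree v := by
  obtain ⟨w, hw⟩ := (degree_pos_iff_exists_adj _ _).mp hv
  obtain ⟨⟨hpos, hlt⟩, -⟩ := fractionalGraph_adj.mp hw
  obtain ⟨e', he', hne, hve'⟩ := hf.exists_ne_mem_fSupp (Sym2.mem_mk_left v w) hlt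
  obtain ⟨w', rfl⟩ := Sym2.mem_iff_exists.mp hve'
  have hw' : (fractionalGraph f).Adj v w' := by
    refine (hf.mem_edgeSet_fractionalGraph he').mpr (lt_of_le_of_ne (hf.1 _).2 fun h1 => hne ?_)
    exact (hf.eq_of_eq_one h1 hpos (Sym2.mem_mk_left v w') (Sym2.mem_mk_left v w)).symm
  rw [← card_neighborFinset_eq_degree, Nat.succ_le_iff, one_lt_card_iff]
  exact ⟨w, w', by simpa using hw, by simpa using hw', fun h => hne (h ▸ rfl)⟩

theorem IsFPM.edgesAndOddCycles_fSupp (hf : IsFPM G f) (hrig : IsRigid (fSupp f)) :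
    EdgesAndOddCycles (fSupp f) := by
  have hHF : (fractionalGraph f).edgeFinset ⊆ fSupp f := by
    intro e he
    induction e using Sym2.ind with
    | _ u w => exact mem_fSupp.mpr (fractionalGraph_adj.mp (mem_edgeFinset.mp he)).1.1
  refine edgesAndOddCycles_of_isCycles hHF (fun e he hH e' he' v hv hv' => ?_) ?_ ?_
  · have h1 : f e = 1 :=
      le_antisymm (hf.1 e).2 (not_lt.mp ((hf.mem_edgeSet_fractionalGraph he).not.mp hH))
    exact hf.eq_of_eq_one h1 (mem_fSupp.mp he') hv hv'
  · refine isCycles_of_card_edgeFinset_le (fun v => hf.two_le_degree_fractionalGraph) ?_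
    rw [← vertSet_edgeFinset]
    exact (hrig.subset hHF).card_le_card_vertSet
  · exact fun u c hc => hrig.odd_length_of_isCycle hc fun e he =>
      hHF (mem_edgeFinset.mpr (c.edges_subset_edgeSet he))

theorem exists_equiv_single_edges_and_odd_cycles_general (G : SimpleGraph V)
    (f : Sym2 V → ℝ) (hf : IsFPM G f) :
    ∃ f' : Sym2 V → ℝ, IsFPM G f' ∧ fSupp f' ⊆ fSupp f ∧ Equiv' f f' ∧
      EdgesAndOddCycles (fSupp f') := by
  obtain ⟨h, hh, hsub, hequiv, hrig⟩ := hf.exists_equiv_isRigid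
  exact ⟨h, hh, hsub, hequiv, hh.edgesAndOddCycles_fSupp hrig⟩

/-- every fractional perfect matching `f` has an equivalent fractional
perfect matching `f'` with `E(f') ⊆ E(f)` such that every connected component of
`G(E(f'))` (ignoring isolated vertices) is a single edge or an odd cycle. -/
theorem exists_equiv_single_edges_and_odd_cycles (G : SimpleGraph V)
    (hG : ∀ v : V, ∃ u, G.Adj u v) (f : Sym2 V → ℝ) (hf : IsFPM G f) :
    ∃ f' : Sym2 V → ℝ, IsFPM G f' ∧ fSupp f' ⊆ fSupp f ∧ Equiv' f f' ∧
      EdgesAndOddCycles (fSupp f') :=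
  exists_equiv_single_edges_and_odd_cycles_general G f hf
end

section
/- For every integer n ≥ 2 and all real numbers x_2, …, x_n: Σ_{ℓ=1}^{n} (1/ℓ) · Σ_{S ⊆ {2,…,n}, |S| = ℓ−1} (∏_{i ∈ S} x_i) · (∏_{i ∈ {2,…,n}∖S} (1 − x_i)) = Σ_{ℓ=1}^{n} ((−1)^{ℓ−1}/ℓ) · Σ_{S ⊆ {2,…,n}, |S| = ℓ−1} ∏_{i ∈ S} x_i. -/
open Finset

/-!
Both sides equal `∫₀¹ ∏ᵢ (t xᵢ + 1 - xᵢ) dt`. Expanding the product as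
`∑_S t^|S| ∏_S xᵢ ∏_{T∖S} (1 - xᵢ)` and integrating `t^|S|` gives the left side; writing each
factor as `(t - 1) xᵢ + 1` and integrating `(t - 1)^|S|` gives the right side.
-/

section ProductExpansion

variable {ι R : Type*} [DecidableEq ι] [CommRing R]

lemma prod_mul_add_one_sub_eq_sum_powerset (T : Finset ι) (x : ι → R) (t : R) :
    ∏ i ∈ T, (t * x i + (1 - x i)) =
      ∑ S ∈ T.powerset, t ^ #S * ((∏ i ∈ S, x i) * ∏ i ∈ T \ S, (1 - x i)) := by
  rw [prod_add]
  refine sum_congr rfl fun S _ => ?_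
  rw [prod_mul_distrib, prod_const, mul_assoc]

lemma prod_mul_add_one_sub_eq_sum_powerset_sub_one_pow (T : Finset ι) (x : ι → R) (t : R) :
    ∏ i ∈ T, (t * x i + (1 - x i)) = ∑ S ∈ T.powerset, (t - 1) ^ #S * ∏ i ∈ S, x i := by
  have h : ∀ i ∈ T, t * x i + (1 - x i) = (t - 1) * x i + 1 := fun _ _ => by ring
  rw [prod_congr rfl h, prod_add]
  simp [prod_mul_distrib]

end ProductExpansion

lemma integral_sub_one_pow (m : ℕ) :
    ∫ t in (0 : ℝ)..1, (t - 1) ^ m = (-1) ^ m / (m + 1) := by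
  rw [intervalIntegral.integral_comp_sub_right (· ^ m), integral_pow]
  simp [pow_succ]

lemma sum_powerset_one_div_card_add_one_mul {ι : Type*} [DecidableEq ι] (T : Finset ι)
    (x : ι → ℝ) :
    ∑ S ∈ T.powerset, 1 / (#S + 1 : ℝ) * ((∏ i ∈ S, x i) * ∏ i ∈ T \ S, (1 - x i)) =
      ∑ S ∈ T.powerset, (-1) ^ #S / (#S + 1 : ℝ) * ∏ i ∈ S, x i := by
  calc _ = ∫ t in (0 : ℝ)..1, ∏ i ∈ T, (t * x i + (1 - x i)) := by
        simp_rw [prod_mul_add_one_sub_eq_sum_powerset]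
        rw [intervalIntegral.integral_finsetSum fun _ _ =>
          (by fun_prop : Continuous _).intervalIntegrable _ _]
        simp [intervalIntegral.integral_mul_const]
    _ = _ := by
        simp_rw [prod_mul_add_one_sub_eq_sum_powerset_sub_one_pow]
        rw [intervalIntegral.integral_finsetSum fun _ _ =>
          (by fun_prop : Continuous _).intervalIntegrable _ _]
        simp [intervalIntegral.integral_mul_const, integral_sub_one_pow]

lemma sum_Icc_sum_powersetCard_sub_one {ι M : Type*} [AddCommMonoid M] (T : Finset ι) {n : ℕ}
    (hn : #T + 1 = n) (f : ℕ → Finset ι → M) :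
    ∑ l ∈ Icc 1 n, ∑ S ∈ T.powersetCard (l - 1), f l S = ∑ S ∈ T.powerset, f (#S + 1) S := by
  rw [sum_powerset, ← hn, ← Ico_add_one_right_eq_Icc, sum_Ico_eq_sum_range]
  refine sum_congr (by simp) fun j _ => sum_congr (by simp) fun S hS => ?_
  rw [(mem_powersetCard.1 hS).2, add_comm]

/-- for every integer `n ≥ 2` and reals `x_2, …, x_n`,
`Σ_{ℓ=1}^{n} (1/ℓ) Σ_{S ⊆ {2,…,n}, |S|=ℓ−1} (∏_{i∈S} x_i)(∏_{i∈{2,…,n}∖S} (1−x_i))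
 = Σ_{ℓ=1}^{n} ((−1)^{ℓ−1}/ℓ) Σ_{S ⊆ {2,…,n}, |S|=ℓ−1} ∏_{i∈S} x_i`. -/
theorem combinatorial_identity (n : ℕ) (hn : 2 ≤ n) (x : ℕ → ℝ) :
    ∑ l ∈ Finset.Icc 1 n, (1 / (l : ℝ)) *
        ∑ S ∈ (Finset.Icc 2 n).powersetCard (l - 1),
          (∏ i ∈ S, x i) * ∏ i ∈ Finset.Icc 2 n \ S, (1 - x i)
    = ∑ l ∈ Finset.Icc 1 n, ((-1 : ℝ) ^ (l - 1) / (l : ℝ)) *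
        ∑ S ∈ (Finset.Icc 2 n).powersetCard (l - 1), ∏ i ∈ S, x i := by
  have hcard : #(Icc 2 n) + 1 = n := by rw [Nat.card_Icc]; omega
  simp_rw [mul_sum]
  rw [sum_Icc_sum_powersetCard_sub_one _ hcard, sum_Icc_sum_powersetCard_sub_one _ hcard]
  simpa using sum_powerset_one_div_card_add_one_mul (Icc 2 n) x
end

section
/- For every integer n ≥ 1 and all real numbers p_1, …, p_n: Σ_{d=1}^{n} p_d · [ Σ_{ℓ=1}^{n} ((−1)^{ℓ−1}/ℓ) · Σ_{S ⊆ [n]∖{d}, |S| = ℓ−1} ∏_{k ∈ S} p_k ] = 1 − ∏_{k=1}^{n} (1 − p_k). -/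
/-!
Write `e_l = ∑_{|T| = l} ∏_{k ∈ T} p_k` for the elementary symmetric sums of `p` over `[n]`.
Each `l`-subset `T` arises as `{d} ∪ S` with `|S| = l - 1` in exactly `l` ways, so summing
`p_d ⬝ e_{l-1}([n] ∖ {d})` over `d` gives `l ⬝ e_l`; the left-hand side therefore collapses to
`∑_l (-1)^(l-1) e_l`, which is `1 - ∏ (1 - p_k)` by expanding the product.
-/

open Finset

namespace Finset

variable {ι R : Type*} [DecidableEq ι]

section CommSemiring

variable [CommSemiring R] (f : ι → R) {s : Finset ι}

theorem mul_sum_powersetCard_erase {d : ι} (hd : d ∈ s) (l : ℕ) :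
    f d * ∑ S ∈ (s.erase d).powersetCard l, ∏ i ∈ S, f i =
      ∑ T ∈ s.powersetCard (l + 1) with d ∈ T, ∏ i ∈ T, f i := by
  have hd' : d ∉ s.erase d := notMem_erase d s
  have hdS : ∀ S ∈ (s.erase d).powersetCard l, d ∉ S := fun S hS h =>
    hd' ((mem_powersetCard.1 hS).1 h)
  rw [← insert_erase hd, powersetCard_succ_insert hd', filter_union,
    filter_false_of_mem fun T hT h => hd' ((mem_powersetCard.1 hT).1 h),
    filter_true_of_mem fun T hT => by
      obtain ⟨S, -, rfl⟩ := mem_image.1 hT; exact mem_insert_self d S,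
    empty_union, erase_insert hd', sum_image, mul_sum]
  · exact sum_congr rfl fun S hS => (prod_insert (hdS S hS)).symm
  · intro S hS S' hS' h
    rw [← erase_insert (hdS S hS), ← erase_insert (hdS S' hS'), h]

theorem sum_mul_sum_powersetCard_erase (l : ℕ) :
    ∑ d ∈ s, f d * ∑ S ∈ (s.erase d).powersetCard l, ∏ i ∈ S, f i =
      (l + 1) * ∑ T ∈ s.powersetCard (l + 1), ∏ i ∈ T, f i := by
  calc ∑ d ∈ s, f d * ∑ S ∈ (s.erase d).powersetCard l, ∏ i ∈ S, f i
      = ∑ d ∈ s, ∑ T ∈ s.powersetCard (l + 1) with d ∈ T, ∏ i ∈ T, f i :=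
        sum_congr rfl fun d hd => mul_sum_powersetCard_erase f hd l
    _ = ∑ T ∈ s.powersetCard (l + 1), ∑ _d ∈ T, ∏ i ∈ T, f i :=
        sum_comm' fun d T => by grind
    _ = (l + 1) * ∑ T ∈ s.powersetCard (l + 1), ∏ i ∈ T, f i := by
        rw [mul_sum]
        refine sum_congr rfl fun T hT => ?_
        rw [sum_const, (mem_powersetCard.1 hT).2, nsmul_eq_mul, Nat.cast_succ]

end CommSemiring

theorem one_sub_prod_one_sub [CommRing R] (f : ι → R) (s : Finset ι) :
    1 - ∏ i ∈ s, (1 - f i) =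
      ∑ l ∈ Icc 1 #s, (-1) ^ (l - 1) * ∑ T ∈ s.powersetCard l, ∏ i ∈ T, f i := by
  have hrange : range (#s + 1) = insert 0 (Icc 1 #s) := by
    ext j
    simp only [mem_range, mem_insert, mem_Icc]
    omega
  rw [prod_sub, sum_powerset, hrange, sum_insert (by simp)]
  simp only [prod_const_one, mul_one, powersetCard_zero, sum_singleton, card_empty, pow_zero,
    prod_empty, sub_add_cancel_left, ← sum_neg_distrib]
  refine sum_congr rfl fun l hl => ?_
  obtain ⟨j, rfl⟩ : ∃ j, l = j + 1 := ⟨l - 1, by grind⟩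
  rw [mul_sum]
  refine sum_congr rfl fun T hT => ?_
  rw [(mem_powersetCard.1 hT).2, Nat.add_sub_cancel, pow_succ]
  ring

end Finset

theorem hit_probability_identity_general (n : ℕ) (p : ℕ → ℝ) :
    ∑ d ∈ Finset.Icc 1 n, p d *
        ∑ l ∈ Finset.Icc 1 n, ((-1 : ℝ) ^ (l - 1) / (l : ℝ)) *
          ∑ S ∈ ((Finset.Icc 1 n).erase d).powersetCard (l - 1), ∏ k ∈ S, p k
    = 1 - ∏ k ∈ Finset.Icc 1 n, (1 - p k) := by
  calc _ = ∑ l ∈ Icc 1 n, ((-1 : ℝ) ^ (l - 1) / l) *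
          ∑ d ∈ Icc 1 n, p d * ∑ S ∈ ((Icc 1 n).erase d).powersetCard (l - 1), ∏ k ∈ S, p k := by
        simp only [mul_sum]
        rw [sum_comm]
        exact sum_congr rfl fun _ _ => sum_congr rfl fun _ _ => sum_congr rfl fun _ _ =>
          mul_left_comm _ _ _
    _ = ∑ l ∈ Icc 1 n, (-1) ^ (l - 1) * ∑ T ∈ (Icc 1 n).powersetCard l, ∏ k ∈ T, p k := by
        refine sum_congr rfl fun l hl => ?_
        obtain ⟨j, rfl⟩ : ∃ j, l = j + 1 := ⟨l - 1, by grind⟩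
        rw [Nat.add_sub_cancel, sum_mul_sum_powersetCard_erase]
        push_cast
        field_simp
    _ = _ := by rw [one_sub_prod_one_sub, Nat.card_Icc, Nat.add_sub_cancel]

/-- for every integer `n ≥ 1` and reals `p_1, …, p_n`,
`Σ_{d=1}^{n} p_d ⬝ [Σ_{ℓ=1}^{n} ((−1)^{ℓ−1}/ℓ) Σ_{S ⊆ [n]∖{d}, |S|=ℓ−1} ∏_{k∈S} p_k]
 = 1 − ∏_{k=1}^{n} (1 − p_k)`. -/
theorem hit_probability_identity (n : ℕ) (hn : 1 ≤ n) (p : ℕ → ℝ) :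
    ∑ d ∈ Finset.Icc 1 n, p d *
        ∑ l ∈ Finset.Icc 1 n, ((-1 : ℝ) ^ (l - 1) / (l : ℝ)) *
          ∑ S ∈ ((Finset.Icc 1 n).erase d).powersetCard (l - 1), ∏ k ∈ S, p k
    = 1 - ∏ k ∈ Finset.Icc 1 n, (1 - p k) :=
  hit_probability_identity_general n p
end

section
/- Let G = ⟨V,E⟩ be a finite simple graph with no isolated vertices and δ ≥ 1. For each j ∈ [δ] let σ_j : E → ℝ satisfy σ_j(e) ≥ 0 for all e and Σ_{e∈E} σ_j(e) = 1, and for a vertex v set P_j(v) = Σ_{e ∈ E, v ∈ e} σ_j(e) and Hit(v) = 1 − ∏_{j∈[δ]} (1 − P_j(v)). Then Σ_{v∈V} Hit(v) ≤ 2δ; moreover, if for every vertex v at most one index j satisfies P_j(v) > 0 (the unidefender case), then Σ_{v∈V} Hit(v) = 2δ, and if some vertex v has at least two indices j with P_j(v) > 0 (the multidefender case), then Σ_{v∈V} Hit(v) < 2δ. -/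
open Finset
open scoped Classical

variable {V : Type*} [Fintype V] [DecidableEq V]

/-!
Let `P_j(v)` be the probability that `σ_j` picks an edge at `v`. Each edge has two endpoints,
so `∑_v P_j(v) = 2` and `∑_v ∑_j P_j(v) = 2δ`. The Weierstrass product inequality
`1 - ∏ (1 - x_i) ≤ ∑ x_i` for `x_i ∈ [0, 1]` bounds `Hit(v)` by `∑_j P_j(v)`; it is an equality
when at most one `x_i` is nonzero, and strict when two of them are positive.
-/

section WeierstrassProduct

variable {ι : Type*} {s : Finset ι} {x : ι → ℝ}

theorem one_sub_sum_le_prod_one_sub (h0 : ∀ i ∈ s, 0 ≤ x i) (h1 : ∀ i ∈ s, x i ≤ 1) :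
    1 - ∑ i ∈ s, x i ≤ ∏ i ∈ s, (1 - x i) := by
  induction s using Finset.induction_on with
  | empty => simp
  | insert a t ha ih =>
    rw [sum_insert ha, prod_insert ha]
    have ha0 := h0 a (mem_insert_self a t)
    have ha1 := h1 a (mem_insert_self a t)
    have ht := ih (fun i hi => h0 i (mem_insert_of_mem hi)) (fun i hi => h1 i (mem_insert_of_mem hi))
    have hsum : 0 ≤ ∑ i ∈ t, x i := sum_nonneg fun i hi => h0 i (mem_insert_of_mem hi)
    nlinarith [mul_le_mul_of_nonneg_left ht (sub_nonneg.2 ha1)]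

theorem prod_one_sub_le_one_sub_of_mem (h0 : ∀ i ∈ s, 0 ≤ x i) (h1 : ∀ i ∈ s, x i ≤ 1)
    {k : ι} (hk : k ∈ s) : ∏ i ∈ s, (1 - x i) ≤ 1 - x k := by
  rw [← mul_prod_erase s _ hk]
  refine mul_le_of_le_one_right (sub_nonneg.2 (h1 k hk)) (prod_le_one ?_ ?_) <;>
    intro i hi <;> linarith [h0 i (mem_of_mem_erase hi), h1 i (mem_of_mem_erase hi)]

theorem one_sub_sum_lt_prod_one_sub (h0 : ∀ i ∈ s, 0 ≤ x i) (h1 : ∀ i ∈ s, x i ≤ 1)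
    {j k : ι} (hj : j ∈ s) (hk : k ∈ s) (hjk : j ≠ k) (hxj : 0 < x j) (hxk : 0 < x k) :
    1 - ∑ i ∈ s, x i < ∏ i ∈ s, (1 - x i) := by
  have h0' : ∀ i ∈ s.erase j, 0 ≤ x i := fun i hi => h0 i (mem_of_mem_erase hi)
  have h1' : ∀ i ∈ s.erase j, x i ≤ 1 := fun i hi => h1 i (mem_of_mem_erase hi)
  have hweier := one_sub_sum_le_prod_one_sub h0' h1'
  have hrest : ∏ i ∈ s.erase j, (1 - x i) < 1 :=
    (prod_one_sub_le_one_sub_of_mem h0' h1' (mem_erase.2 ⟨hjk.symm, hk⟩)).trans_lt (by linarith)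
  rw [← add_sum_erase s x hj, ← mul_prod_erase s _ hj]
  -- the excess over the non-strict bound is at least `x j * (1 - ∏ i ∈ s.erase j, (1 - x i))`
  nlinarith [mul_pos hxj (sub_pos.2 hrest)]

theorem one_sub_prod_one_sub_eq_sum (h : #(s.filter fun i => x i ≠ 0) ≤ 1) :
    1 - ∏ i ∈ s, (1 - x i) = ∑ i ∈ s, x i := by
  rw [← prod_filter_of_ne fun i _ hi => by simpa using hi, ← sum_filter_ne_zero]
  rcases Nat.le_one_iff_eq_zero_or_eq_one.1 h with h | h
  · simp [card_eq_zero.1 h]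
  · obtain ⟨a, ha⟩ := card_eq_one.1 h
    simp [ha]

end WeierstrassProduct

theorem card_filter_mem_of_not_isDiag {e : Sym2 V} (he : ¬e.IsDiag) :
    #(univ.filter fun v : V => v ∈ e) = 2 := by
  rw [← Sym2.card_toFinset_of_not_isDiag e he]
  congr 1
  ext v
  simp

theorem fracDeg_nonneg {f : Sym2 V → ℝ} (hf : ∀ e, 0 ≤ f e) (v : V) : 0 ≤ fracDeg f v :=
  sum_nonneg fun e _ => hf e

theorem fracDeg_le_sum {f : Sym2 V → ℝ} (hf : ∀ e, 0 ≤ f e) (v : V) :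
    fracDeg f v ≤ ∑ e, f e :=
  sum_le_sum_of_subset_of_nonneg (filter_subset _ _) fun e _ _ => hf e

theorem sum_fracDeg {f : Sym2 V → ℝ} (hf : ∀ e, e.IsDiag → f e = 0) :
    ∑ v, fracDeg f v = 2 * ∑ e, f e := by
  unfold fracDeg
  simp_rw [sum_filter]
  rw [sum_comm, mul_sum]
  refine sum_congr rfl fun e _ => ?_
  by_cases he : e.IsDiag
  · simp [hf e he]
  · rw [← sum_filter, sum_const, card_filter_mem_of_not_isDiag he, nsmul_eq_mul, Nat.cast_ofNat]

theorem sum_hit_probabilities_general (G : SimpleGraph V)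
    (δ : ℕ) (σ : Fin δ → Sym2 V → ℝ)
    (hpos : ∀ j e, 0 ≤ σ j e)
    (hedge : ∀ j e, e ∉ G.edgeSet → σ j e = 0)
    (hsum : ∀ j, ∑ e : Sym2 V, σ j e = 1) :
    (∑ v : V, (1 - ∏ j, (1 - fracDeg (σ j) v)) ≤ 2 * (δ : ℝ)) ∧
    ((∀ v : V, (Finset.univ.filter (fun j => 0 < fracDeg (σ j) v)).card ≤ 1) →
      ∑ v : V, (1 - ∏ j, (1 - fracDeg (σ j) v)) = 2 * (δ : ℝ)) ∧
    ((∃ v : V, 2 ≤ (Finset.univ.filter (fun j => 0 < fracDeg (σ j) v)).card) →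
      ∑ v : V, (1 - ∏ j, (1 - fracDeg (σ j) v)) < 2 * (δ : ℝ)) := by
  have hP0 : ∀ v, ∀ j ∈ univ, 0 ≤ fracDeg (σ j) v := fun v j _ => fracDeg_nonneg (hpos j) v
  have hP1 : ∀ v, ∀ j ∈ univ, fracDeg (σ j) v ≤ 1 := fun v j _ =>
    (fracDeg_le_sum (hpos j) v).trans (hsum j).le
  have htotal : ∑ v, ∑ j, fracDeg (σ j) v = 2 * (δ : ℝ) := by
    have hdiag : ∀ j e, e.IsDiag → σ j e = 0 := fun j e he =>
      hedge j e fun hE => G.not_isDiag_of_mem_edgeSet hE he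
    simp [sum_comm (s := univ (α := V)), sum_fracDeg (hdiag _), hsum, mul_comm]
  have hhit : ∀ v, 1 - ∏ j, (1 - fracDeg (σ j) v) ≤ ∑ j, fracDeg (σ j) v := fun v => by
    linarith [one_sub_sum_le_prod_one_sub (hP0 v) (hP1 v)]
  rw [← htotal]
  refine ⟨sum_le_sum fun v _ => hhit v, fun huni => ?_, fun ⟨v, hv⟩ => ?_⟩
  · refine sum_congr rfl fun v _ => one_sub_prod_one_sub_eq_sum ?_
    convert huni v using 4 with j
    exact ⟨fun h => (hP0 v j (mem_univ j)).lt_of_ne' h, ne_of_gt⟩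
  · refine sum_lt_sum (fun v _ => hhit v) ⟨v, mem_univ v, ?_⟩
    obtain ⟨j, hj, k, hk, hjk⟩ := one_lt_card.1 hv
    rw [mem_filter] at hj hk
    linarith [one_sub_sum_lt_prod_one_sub (hP0 v) (hP1 v) hj.1 hk.1 hjk hj.2 hk.2]

/-- for `δ` independent probability distributions `σ_j` on the edge set of
`G`, with `P_j(v) = fracDeg (σ j) v` and `Hit(v) = 1 − ∏_j (1 − P_j(v))`:
`Σ_v Hit(v) ≤ 2δ`, with equality in the unidefender case (each vertex has at most one
`j` with `P_j(v) > 0`), and strict inequality in the multidefender case (some vertex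
has at least two such `j`). -/
theorem sum_hit_probabilities (G : SimpleGraph V) (hG : ∀ v : V, ∃ u, G.Adj u v)
    (δ : ℕ) (hδ : 1 ≤ δ) (σ : Fin δ → Sym2 V → ℝ)
    (hpos : ∀ j e, 0 ≤ σ j e)
    (hedge : ∀ j e, e ∉ G.edgeSet → σ j e = 0)
    (hsum : ∀ j, ∑ e : Sym2 V, σ j e = 1) :
    (∑ v : V, (1 - ∏ j, (1 - fracDeg (σ j) v)) ≤ 2 * (δ : ℝ)) ∧
    ((∀ v : V, (Finset.univ.filter (fun j => 0 < fracDeg (σ j) v)).card ≤ 1) →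
      ∑ v : V, (1 - ∏ j, (1 - fracDeg (σ j) v)) = 2 * (δ : ℝ)) ∧
    ((∃ v : V, 2 ≤ (Finset.univ.filter (fun j => 0 < fracDeg (σ j) v)).card) →
      ∑ v : V, (1 - ∏ j, (1 - fracDeg (σ j) v)) < 2 * (δ : ℝ)) :=
  sum_hit_probabilities_general G δ σ hpos hedge hsum
end

section
/- In every Nash equilibrium σ of AD_{α,δ}(G), the union Supports_σ(D) of the defenders' supports is an edge cover of G, i.e., every vertex of V belongs to some edge in Supports_σ(D). -/
/-!
If some vertex `v` lies on no edge of any defender's support, an attacker who moves to `v` is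
never caught, so in equilibrium every attacker already escapes with probability one. Then no
defender ever catches anyone and each defender's payoff is `0`. But a defender who moves to an
edge through a vertex that an attacker visits with positive probability earns a positive payoff,
contradicting equilibrium.
-/

open Finset
open scoped Classical

variable {V : Type*} [Fintype V] [DecidableEq V]

/-- A mixed profile of the game `AD_{α,δ}(G)`: each of the `α` attackers has a
probability distribution on the vertices, and each of the `δ` defenders has a
probability distribution on the edges of `G`. -/
structure MixedProfile (G : SimpleGraph V) (α δ : ℕ) where
  atk : Fin α → V → ℝ
  dfn : Fin δ → Sym2 V → ℝ
  atk_nonneg : ∀ i v, 0 ≤ atk i v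
  atk_sum : ∀ i, ∑ v : V, atk i v = 1
  dfn_nonneg : ∀ j e, 0 ≤ dfn j e
  dfn_edge : ∀ j e, e ∉ G.edgeSet → dfn j e = 0
  dfn_sum : ∀ j, ∑ e : Sym2 V, dfn j e = 1

namespace MixedProfile

variable {G : SimpleGraph V} {α δ : ℕ}

/-- A pure configuration: a vertex for each attacker, an edge for each defender. -/
abbrev Config (V : Type*) (α δ : ℕ) := (Fin α → V) × (Fin δ → Sym2 V)

/-- The probability of a pure configuration under the (independent) mixed profile. -/
noncomputable def configProb (σ : MixedProfile G α δ) (c : Config V α δ) : ℝ :=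
  (∏ i, σ.atk i (c.1 i)) * ∏ j, σ.dfn j (c.2 j)

/-- The number of attackers choosing vertex `w` in configuration `c`. -/
noncomputable def atkCount (c : Config V α δ) (w : V) : ℕ :=
  (Finset.univ.filter (fun i : Fin α => c.1 i = w)).card

/-- The number of defenders choosing an edge containing `w` in configuration `c`. -/
noncomputable def dfnCount (c : Config V α δ) (w : V) : ℕ :=
  (Finset.univ.filter (fun j : Fin δ => w ∈ c.2 j)).card

/-- The utility of defender `d` at a pure configuration: the fair share
`|A_s(u)|/|D_s(u)| + |A_s(v)|/|D_s(v)|` for its chosen edge `(u,v)`. -/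
noncomputable def defUtilPure (c : Config V α δ) (d : Fin δ) : ℝ :=
  ∑ w ∈ Finset.univ.filter (fun w : V => w ∈ c.2 d),
    (atkCount c w : ℝ) / (dfnCount c w : ℝ)

/-- The utility of attacker `a` at a pure configuration: `0` if caught, `1` otherwise. -/
noncomputable def atkUtilPure (c : Config V α δ) (a : Fin α) : ℝ :=
  if ∃ j, c.1 a ∈ c.2 j then 0 else 1

/-- Expected utility of defender `d`. -/
noncomputable def expDefUtil (σ : MixedProfile G α δ) (d : Fin δ) : ℝ :=
  ∑ c : Config V α δ, σ.configProb c * defUtilPure c d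

/-- Expected utility of attacker `a`. -/
noncomputable def expAtkUtil (σ : MixedProfile G α δ) (a : Fin α) : ℝ :=
  ∑ c : Config V α δ, σ.configProb c * atkUtilPure c a

/-- `σ` is a Nash equilibrium: no player can strictly increase her expected utility by
unilaterally changing her mixed strategy. -/
def IsNash (σ : MixedProfile G α δ) : Prop :=
  (∀ (τ : MixedProfile G α δ) (a : Fin α),
      (∀ i, i ≠ a → τ.atk i = σ.atk i) → τ.dfn = σ.dfn →
      τ.expAtkUtil a ≤ σ.expAtkUtil a) ∧
  (∀ (τ : MixedProfile G α δ) (d : Fin δ),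
      τ.atk = σ.atk → (∀ j, j ≠ d → τ.dfn j = σ.dfn j) →
      τ.expDefUtil d ≤ σ.expDefUtil d)

/-- The union of the supports of the defenders. -/
noncomputable def dfnSupports (σ : MixedProfile G α δ) : Finset (Sym2 V) :=
  Finset.univ.filter (fun e => ∃ j, 0 < σ.dfn j e)

/-- The union of the supports of the attackers. -/
noncomputable def atkSupports (σ : MixedProfile G α δ) : Finset V :=
  Finset.univ.filter (fun v => ∃ i, 0 < σ.atk i v)

/-- The probability that some defender chooses an edge containing `v`. -/
noncomputable def hitProb (σ : MixedProfile G α δ) (v : V) : ℝ :=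
  1 - ∏ j, (1 - fracDeg (σ.dfn j) v)

/-- The minimum hitting probability of the profile. -/
noncomputable def minHit [Nonempty V] (σ : MixedProfile G α δ) : ℝ :=
  Finset.univ.inf' Finset.univ_nonempty σ.hitProb

/-- The Defense-Ratio of a profile. -/
noncomputable def defenseRatio (σ : MixedProfile G α δ) : ℝ :=
  (α : ℝ) / ∑ d, σ.expDefUtil d

end MixedProfile

/-- `F` is an edge cover of `G`. -/
def IsEdgeCover (G : SimpleGraph V) (F : Finset (Sym2 V)) : Prop :=
  (↑F ⊆ G.edgeSet) ∧ ∀ v : V, ∃ e ∈ F, v ∈ e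

/-- `β'(G)`: the minimum size of an edge cover of `G`. -/
noncomputable def edgeCoverNumber (G : SimpleGraph V) : ℕ :=
  sInf {n : ℕ | ∃ F : Finset (Sym2 V), IsEdgeCover G F ∧ F.card = n}

open MixedProfile

namespace MixedProfile

variable {V : Type*} {α δ : ℕ}

section Pure

variable [DecidableEq V]

lemma atkUtilPure_eq_one_iff (c : Config V α δ) (a : Fin α) :
    atkUtilPure c a = 1 ↔ ∀ j, c.1 a ∉ c.2 j := by
  by_cases h : ∃ j, c.1 a ∈ c.2 j <;> simp_all [atkUtilPure]

lemma atkUtilPure_le_one (c : Config V α δ) (a : Fin α) : atkUtilPure c a ≤ 1 := by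
  unfold atkUtilPure; split_ifs <;> norm_num

lemma atkCount_pos_iff (c : Config V α δ) (w : V) : 0 < atkCount c w ↔ ∃ i, c.1 i = w := by
  simp [atkCount, card_pos, filter_nonempty_iff]

lemma dfnCount_pos_of_mem (c : Config V α δ) {d : Fin δ} {w : V} (hw : w ∈ c.2 d) :
    0 < dfnCount c w :=
  card_pos.2 ⟨d, mem_filter.2 ⟨mem_univ d, hw⟩⟩

lemma defUtilPure_nonneg [Fintype V] (c : Config V α δ) (d : Fin δ) : 0 ≤ defUtilPure c d :=
  sum_nonneg fun _ _ => by positivity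

lemma defUtilPure_pos_iff [Fintype V] (c : Config V α δ) (d : Fin δ) :
    0 < defUtilPure c d ↔ ∃ i, c.1 i ∈ c.2 d := by
  rw [defUtilPure, sum_pos_iff_of_nonneg fun w _ => by positivity]
  simp only [mem_filter, mem_univ, true_and]
  constructor
  · rintro ⟨w, hw, hpos⟩
    have hD : (0 : ℝ) < dfnCount c w := Nat.cast_pos.2 (dfnCount_pos_of_mem c hw)
    obtain ⟨i, rfl⟩ := (atkCount_pos_iff c w).1 (Nat.cast_pos.1 ((div_pos_iff_of_pos_right hD).1 hpos))
    exact ⟨i, hw⟩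
  · rintro ⟨i, hi⟩
    have hA : 0 < atkCount c (c.1 i) := (atkCount_pos_iff c _).2 ⟨i, rfl⟩
    have hD : 0 < dfnCount c (c.1 i) := dfnCount_pos_of_mem c hi
    exact ⟨c.1 i, hi, by positivity⟩

end Pure

variable [Fintype V] {G : SimpleGraph V} (σ : MixedProfile G α δ)

lemma configProb_nonneg (c : Config V α δ) : 0 ≤ σ.configProb c :=
  mul_nonneg (prod_nonneg fun i _ => σ.atk_nonneg i _) (prod_nonneg fun j _ => σ.dfn_nonneg j _)

lemma configProb_pos_iff (c : Config V α δ) :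
    0 < σ.configProb c ↔ (∀ i, 0 < σ.atk i (c.1 i)) ∧ ∀ j, 0 < σ.dfn j (c.2 j) := by
  refine ⟨fun h => ?_, fun ⟨hA, hD⟩ => mul_pos (prod_pos fun i _ => hA i) (prod_pos fun j _ => hD j)⟩
  obtain ⟨hA, hD⟩ := mul_ne_zero_iff.1 h.ne'
  rw [prod_ne_zero_iff] at hA hD
  exact ⟨fun i => (σ.atk_nonneg i _).lt_of_ne' (hA i (mem_univ i)),
    fun j => (σ.dfn_nonneg j _).lt_of_ne' (hD j (mem_univ j))⟩

lemma sum_configProb : ∑ c : Config V α δ, σ.configProb c = 1 := by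
  simp only [configProb, Fintype.sum_prod_type, ← sum_mul_sum, ← Fintype.prod_sum, σ.atk_sum,
    σ.dfn_sum, prod_const_one, mul_one]

lemma exists_configProb_pos : ∃ c : Config V α δ, 0 < σ.configProb c := by
  obtain ⟨c, -, hc⟩ := exists_lt_of_sum_lt (s := univ) (f := 0) (g := σ.configProb)
    (by simp [sum_configProb])
  exact ⟨c, hc⟩

variable [DecidableEq V]

lemma expAtkUtil_le_one (a : Fin α) : σ.expAtkUtil a ≤ 1 :=
  calc σ.expAtkUtil a ≤ ∑ c : Config V α δ, σ.configProb c :=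
        sum_le_sum fun c _ => mul_le_of_le_one_right (σ.configProb_nonneg c) (atkUtilPure_le_one c a)
    _ = 1 := σ.sum_configProb

lemma expAtkUtil_eq_one_iff (a : Fin α) :
    σ.expAtkUtil a = 1 ↔ ∀ c, 0 < σ.configProb c → ∀ j, c.1 a ∉ c.2 j := by
  have hgap : 1 - σ.expAtkUtil a = ∑ c : Config V α δ, σ.configProb c * (1 - atkUtilPure c a) := by
    simp only [expAtkUtil, mul_sub, mul_one, sum_sub_distrib, sum_configProb]
  have hnonneg : ∀ c ∈ (univ : Finset (Config V α δ)), 0 ≤ σ.configProb c * (1 - atkUtilPure c a) :=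
    fun c _ => mul_nonneg (σ.configProb_nonneg c) (sub_nonneg.2 (atkUtilPure_le_one c a))
  rw [← sub_eq_zero, ← neg_eq_zero, neg_sub, hgap, sum_eq_zero_iff_of_nonneg hnonneg]
  refine forall_congr' fun c => ?_
  rw [← atkUtilPure_eq_one_iff, (σ.configProb_nonneg c).lt_iff_ne', mul_eq_zero, sub_eq_zero,
    eq_comm (a := (1 : ℝ))]
  simp only [mem_univ, true_implies]
  tauto

lemma expDefUtil_pos_iff (d : Fin δ) :
    0 < σ.expDefUtil d ↔ ∃ c, 0 < σ.configProb c ∧ ∃ i, c.1 i ∈ c.2 d := by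
  rw [expDefUtil, sum_pos_iff_of_nonneg fun c _ =>
    mul_nonneg (σ.configProb_nonneg c) (defUtilPure_nonneg c d)]
  refine exists_congr fun c => ?_
  rw [← defUtilPure_pos_iff]
  simp only [mem_univ, true_and]
  exact ⟨fun h => ⟨pos_of_mul_pos_left h (defUtilPure_nonneg c d),
    pos_of_mul_pos_right h (σ.configProb_nonneg c)⟩, fun ⟨h₁, h₂⟩ => mul_pos h₁ h₂⟩

def deviateAtk (a : Fin α) (v : V) : MixedProfile G α δ where
  atk := Function.update σ.atk a (Pi.single v 1)
  dfn := σ.dfn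
  atk_nonneg i w := by
    rcases eq_or_ne i a with rfl | hi
    · simp only [Function.update_self, Pi.single_apply]; positivity
    · simpa [Function.update_of_ne hi] using σ.atk_nonneg i w
  atk_sum i := by
    rcases eq_or_ne i a with rfl | hi
    · simp
    · simpa [Function.update_of_ne hi] using σ.atk_sum i
  dfn_nonneg := σ.dfn_nonneg
  dfn_edge := σ.dfn_edge
  dfn_sum := σ.dfn_sum

def deviateDfn (d : Fin δ) {e : Sym2 V} (he : e ∈ G.edgeSet) : MixedProfile G α δ where
  atk := σ.atk
  dfn := Function.update σ.dfn d (Pi.single e 1)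
  atk_nonneg := σ.atk_nonneg
  atk_sum := σ.atk_sum
  dfn_nonneg j f := by
    rcases eq_or_ne j d with rfl | hj
    · simp only [Function.update_self, Pi.single_apply]; positivity
    · simpa [Function.update_of_ne hj] using σ.dfn_nonneg j f
  dfn_edge j f hf := by
    rcases eq_or_ne j d with rfl | hj
    · simp [show f ≠ e from fun h => hf (h ▸ he)]
    · simpa [Function.update_of_ne hj] using σ.dfn_edge j f hf
  dfn_sum j := by
    rcases eq_or_ne j d with rfl | hj
    · simp
    · simpa [Function.update_of_ne hj] using σ.dfn_sum j

variable {σ}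

lemma IsNash.expAtkUtil_deviateAtk_le (hσ : σ.IsNash) (a : Fin α) (v : V) :
    (σ.deviateAtk a v).expAtkUtil a ≤ σ.expAtkUtil a :=
  hσ.1 _ a (fun _ hi => Function.update_of_ne hi _ _) rfl

lemma IsNash.expDefUtil_deviateDfn_le (hσ : σ.IsNash) (d : Fin δ) {e : Sym2 V}
    (he : e ∈ G.edgeSet) : (σ.deviateDfn d he).expDefUtil d ≤ σ.expDefUtil d :=
  hσ.2 _ d rfl fun _ hj => Function.update_of_ne hj _ _

lemma expAtkUtil_deviateAtk_eq_one {v : V} (hv : ∀ e ∈ σ.dfnSupports, v ∉ e) (a : Fin α) :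
    (σ.deviateAtk a v).expAtkUtil a = 1 := by
  refine (expAtkUtil_eq_one_iff _ a).2 fun c hc j => ?_
  obtain ⟨hA, hD⟩ := (configProb_pos_iff _ c).1 hc
  have hca : c.1 a = v := by
    by_contra h
    simpa [deviateAtk, Pi.single_apply, h] using hA a
  exact hca ▸ hv (c.2 j) (mem_filter.2 ⟨mem_univ _, j, hD j⟩)

lemma expDefUtil_deviateDfn_pos {c : Config V α δ} (hc : 0 < σ.configProb c) (d : Fin δ)
    {e : Sym2 V} (he : e ∈ G.edgeSet) {a : Fin α} (hae : c.1 a ∈ e) :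
    0 < (σ.deviateDfn d he).expDefUtil d := by
  obtain ⟨hA, hD⟩ := (configProb_pos_iff σ c).1 hc
  refine (expDefUtil_pos_iff _ d).2 ⟨(c.1, Function.update c.2 d e), ?_, a, by simpa using hae⟩
  refine (configProb_pos_iff _ _).2 ⟨hA, fun j => ?_⟩
  rcases eq_or_ne j d with rfl | hj
  · simp [deviateDfn]
  · simpa [deviateDfn, Function.update_of_ne hj] using hD j

end MixedProfile

/-- in every Nash equilibrium of `AD_{α,δ}(G)`, the union of the
defenders' supports is an edge cover of `G`. -/
theorem nash_defender_supports_edge_cover (G : SimpleGraph V)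
    (hG : ∀ v : V, ∃ u, G.Adj u v) (α δ : ℕ) (hα : 1 ≤ α) (hδ : 1 ≤ δ)
    (σ : MixedProfile G α δ) (hσ : σ.IsNash) :
    ∀ v : V, ∃ e ∈ σ.dfnSupports, v ∈ e := by
  intro v
  by_contra! hv
  have hescape : ∀ a c, 0 < σ.configProb c → ∀ j, c.1 a ∉ c.2 j := fun a =>
    (σ.expAtkUtil_eq_one_iff a).1 <| (σ.expAtkUtil_le_one a).antisymm <|
      (expAtkUtil_deviateAtk_eq_one hv a).symm.trans_le (hσ.expAtkUtil_deviateAtk_le a v)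
  let a : Fin α := ⟨0, hα⟩
  let d : Fin δ := ⟨0, hδ⟩
  obtain ⟨c, hc⟩ := σ.exists_configProb_pos
  obtain ⟨u, hu⟩ := hG (c.1 a)
  have hdeviate : 0 < (σ.deviateDfn d hu).expDefUtil d :=
    expDefUtil_deviateDfn_pos hc d hu (Sym2.mem_mk_right u _)
  have hzero : ¬ 0 < σ.expDefUtil d := by
    rw [expDefUtil_pos_iff]
    rintro ⟨c', hc', i, hi⟩
    exact hescape i c' hc' d hi
  exact hzero (hdeviate.trans_le (hσ.expDefUtil_deviateDfn_le d hu))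
end

section
/- Assume that |V|/2 < δ < β'(G), where β'(G) is the minimum size of an edge cover of G. Then AD_{α,δ}(G) has no Defense-Optimal Nash equilibrium, i.e., no Nash equilibrium σ with DR_σ = max{1, |V|/(2δ)}. -/
open Finset
open scoped Classical

variable {V : Type*} [Fintype V] [DecidableEq V]

open MixedProfile

/-!
Since `|V| < 2δ`, Defense-Optimality means `DR_σ = 1`: the defenders collect `α` in expectation.
In every pure profile each attacker is either caught, and then shared among the defenders covering
its vertex, or escapes and earns `1`; so the utilities of all players add up to `α`, and every
attacker's expected utility is `0`. By the Nash condition no vertex may then be safer for an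
attacker, so each vertex is hit with probability `1`, i.e. some defender plays only edges through
it. One support edge per defender is therefore an edge cover of size at most `δ < β'(G)`.
-/

theorem Fintype.sum_prod_mul_apply_of_sum_eq_one {ι κ R : Type*} [Fintype ι] [DecidableEq ι]
    [Fintype κ] [CommSemiring R] {p : ι → κ → R} (hp : ∀ i, ∑ x, p i x = 1) (a : ι)
    (g : κ → R) :
    ∑ f : ι → κ, (∏ i, p i (f i)) * g (f a) = ∑ x, p a x * g x := by
  set q := Function.update p a (fun x => p a x * g x)
  have hq : ∀ f : ι → κ, (∏ i, p i (f i)) * g (f a) = ∏ i, q i (f i) := by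
    intro f
    have hcompl : ∏ i ∈ {a}ᶜ, q i (f i) = ∏ i ∈ {a}ᶜ, p i (f i) :=
      Finset.prod_congr rfl fun i hi => by simp only [q, Function.update_of_ne (by simpa using hi)]
    rw [Fintype.prod_eq_mul_prod_compl a, Fintype.prod_eq_mul_prod_compl a (fun i => q i (f i)),
      hcompl]
    simp only [q, Function.update_self]
    ring
  simp_rw [hq, ← Fintype.prod_sum]
  rw [Fintype.prod_eq_single a fun i hi => by simp only [q, Function.update_of_ne hi, hp]]
  simp only [q, Function.update_self]

namespace MixedProfile

variable {G : SimpleGraph V} {α δ : ℕ}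

section Pure

variable (c : Config V α δ)

lemma sum_defUtilPure :
    ∑ d, defUtilPure c d = ∑ w, if dfnCount c w = 0 then 0 else (atkCount c w : ℝ) := by
  simp_rw [defUtilPure, Finset.sum_filter]
  rw [Finset.sum_comm]
  refine Finset.sum_congr rfl fun w _ => ?_
  rw [← Finset.sum_filter, Finset.sum_const, nsmul_eq_mul]
  change (dfnCount c w : ℝ) * _ = _
  split_ifs with h
  · simp [h]
  · rw [mul_div_cancel₀ _ (Nat.cast_ne_zero.mpr h)]

lemma sum_atkUtilPure :
    ∑ a, atkUtilPure c a = ∑ w, if dfnCount c w = 0 then (atkCount c w : ℝ) else 0 := by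
  have hcaught : ∀ a, atkUtilPure c a = if dfnCount c (c.1 a) = 0 then 1 else 0 := by
    intro a
    by_cases h : ∃ j, c.1 a ∈ c.2 j <;>
      simp [atkUtilPure, dfnCount, h, Finset.card_eq_zero, Finset.filter_eq_empty_iff]
  simp_rw [hcaught]
  rw [← Finset.sum_fiberwise' Finset.univ c.1
    (fun w => if dfnCount c w = 0 then (1 : ℝ) else 0)]
  refine Finset.sum_congr rfl fun w _ => ?_
  rw [Finset.sum_const, nsmul_eq_mul]
  change (atkCount c w : ℝ) * _ = _
  split_ifs <;> simp

lemma sum_atkCount : ∑ w, (atkCount c w : ℝ) = α := by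
  simp only [atkCount]
  rw [← Nat.cast_sum,
    ← Finset.card_eq_sum_card_fiberwise fun _ _ => Finset.mem_univ _]
  simp

lemma sum_defUtilPure_add_sum_atkUtilPure :
    ∑ d, defUtilPure c d + ∑ a, atkUtilPure c a = α := by
  rw [sum_defUtilPure, sum_atkUtilPure, ← Finset.sum_add_distrib, ← sum_atkCount c]
  refine Finset.sum_congr rfl fun w _ => ?_
  split_ifs <;> simp

end Pure

variable (σ : MixedProfile G α δ)

lemma sum_expDefUtil_add_sum_expAtkUtil :
    ∑ d, σ.expDefUtil d + ∑ a, σ.expAtkUtil a = α := by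
  have hprob : ∑ c, σ.configProb c = 1 := by
    rw [Fintype.sum_prod_type]
    simp only [configProb]
    rw [← Finset.sum_mul_sum, ← Fintype.prod_sum, ← Fintype.prod_sum]
    simp [σ.atk_sum, σ.dfn_sum]
  simp only [expDefUtil, expAtkUtil]
  rw [Finset.sum_comm, Finset.sum_comm (γ := Fin α), ← Finset.sum_add_distrib]
  simp_rw [← Finset.mul_sum, ← mul_add, sum_defUtilPure_add_sum_atkUtilPure]
  rw [← Finset.sum_mul, hprob, one_mul]

lemma expAtkUtil_nonneg (a : Fin α) : 0 ≤ σ.expAtkUtil a :=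
  Finset.sum_nonneg fun c _ =>
    mul_nonneg (mul_nonneg (Finset.prod_nonneg fun i _ => σ.atk_nonneg i _)
      (Finset.prod_nonneg fun j _ => σ.dfn_nonneg j _))
      (by rw [atkUtilPure]; split_ifs <;> norm_num)

lemma one_sub_fracDeg (j : Fin δ) (v : V) :
    1 - fracDeg (σ.dfn j) v = ∑ e with v ∉ e, σ.dfn j e := by
  rw [← σ.dfn_sum j, fracDeg, ← Finset.sum_filter_add_sum_filter_not Finset.univ (v ∈ ·)]
  ring

lemma fracDeg_le_one (j : Fin δ) (v : V) : fracDeg (σ.dfn j) v ≤ 1 := by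
  rw [← sub_nonneg, one_sub_fracDeg]
  exact Finset.sum_nonneg fun e _ => σ.dfn_nonneg j e

lemma hitProb_le_one (v : V) : σ.hitProb v ≤ 1 := by
  rw [hitProb, sub_le_self_iff]
  exact Finset.prod_nonneg fun j _ => sub_nonneg.2 (σ.fracDeg_le_one j v)

lemma expAtkUtil_eq (a : Fin α) :
    σ.expAtkUtil a = ∑ v, σ.atk a v * (1 - σ.hitProb v) := by
  have hcaught : ∀ c : Config V α δ,
      atkUtilPure c a = ∏ j, if c.1 a ∈ c.2 j then (0 : ℝ) else 1 := by
    intro c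
    rw [atkUtilPure]
    split_ifs with h
    · obtain ⟨j, hj⟩ := h
      rw [eq_comm, Finset.prod_eq_zero_iff]
      exact ⟨j, Finset.mem_univ j, if_pos hj⟩
    · exact (Finset.prod_eq_one fun j _ => if_neg fun hj => h ⟨j, hj⟩).symm
  have hescape : ∀ v, ∑ g : Fin δ → Sym2 V,
      (∏ j, σ.dfn j (g j)) * ∏ j, (if v ∈ g j then (0 : ℝ) else 1) = 1 - σ.hitProb v := by
    intro v
    rw [hitProb, sub_sub_cancel]
    simp_rw [← Finset.prod_mul_distrib]
    refine (Fintype.prod_sum fun j e => σ.dfn j e * if v ∈ e then (0 : ℝ) else 1).symm.trans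
      (Finset.prod_congr rfl fun j _ => ?_)
    rw [one_sub_fracDeg, Finset.sum_filter]
    simp [mul_ite]
  simp_rw [expAtkUtil, hcaught, configProb, Fintype.sum_prod_type, mul_assoc, ← Finset.mul_sum,
    hescape]
  exact Fintype.sum_prod_mul_apply_of_sum_eq_one σ.atk_sum a fun v => 1 - σ.hitProb v

noncomputable def moveAtk (a : Fin α) (u : V) : MixedProfile G α δ where
  atk := Function.update σ.atk a fun v => if v = u then 1 else 0
  dfn := σ.dfn
  atk_nonneg i v := by
    rcases eq_or_ne i a with rfl | h
    · rw [Function.update_self]; split_ifs <;> norm_num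
    · rw [Function.update_of_ne h]; exact σ.atk_nonneg i v
  atk_sum i := by
    rcases eq_or_ne i a with rfl | h
    · simp
    · rw [Function.update_of_ne h]; exact σ.atk_sum i
  dfn_nonneg := σ.dfn_nonneg
  dfn_edge := σ.dfn_edge
  dfn_sum := σ.dfn_sum

lemma expAtkUtil_moveAtk (a : Fin α) (u : V) :
    (σ.moveAtk a u).expAtkUtil a = 1 - σ.hitProb u := by
  rw [expAtkUtil_eq]
  simp [moveAtk, hitProb]

lemma IsNash.hitProb_eq_one {σ : MixedProfile G α δ} (hσ : σ.IsNash) {a : Fin α}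
    (ha : σ.expAtkUtil a = 0) (u : V) : σ.hitProb u = 1 := by
  have hdev := hσ.1 (σ.moveAtk a u) a (fun i hi => Function.update_of_ne hi _ _) rfl
  rw [expAtkUtil_moveAtk, ha] at hdev
  linarith [σ.hitProb_le_one u]

lemma exists_fracDeg_eq_one_of_hitProb_eq_one {v : V} (h : σ.hitProb v = 1) :
    ∃ j, fracDeg (σ.dfn j) v = 1 := by
  rw [hitProb, sub_eq_self, Finset.prod_eq_zero_iff] at h
  obtain ⟨j, -, hj⟩ := h
  exact ⟨j, by linarith⟩

lemma mem_of_fracDeg_eq_one {j : Fin δ} {v : V} (h : fracDeg (σ.dfn j) v = 1) {e : Sym2 V}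
    (he : 0 < σ.dfn j e) : v ∈ e := by
  by_contra hv
  have hzero : ∑ e with v ∉ e, σ.dfn j e = 0 := by rw [← one_sub_fracDeg, h, sub_self]
  have := (Finset.sum_eq_zero_iff_of_nonneg fun e _ => σ.dfn_nonneg j e).1 hzero e
    (by simpa using hv)
  linarith

lemma edgeCoverNumber_le_of_forall_hitProb_eq_one (h : ∀ v, σ.hitProb v = 1) :
    edgeCoverNumber G ≤ δ := by
  have hsupp : ∀ j, ∃ e, 0 < σ.dfn j e := by
    intro j
    obtain ⟨e, -, he⟩ := Finset.exists_lt_of_sum_lt (s := Finset.univ) (f := fun _ => (0 : ℝ))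
      (g := σ.dfn j) (by simp [σ.dfn_sum j])
    exact ⟨e, he⟩
  choose e he using hsupp
  have hcover : IsEdgeCover G (Finset.univ.image e) := by
    refine ⟨?_, fun v => ?_⟩
    · simp only [Finset.coe_image, Finset.coe_univ, Set.image_univ, Set.range_subset_iff]
      intro j
      by_contra hj
      exact (he j).ne' (σ.dfn_edge j _ hj)
    · obtain ⟨j, hj⟩ := σ.exists_fracDeg_eq_one_of_hitProb_eq_one (h v)
      exact ⟨e j, Finset.mem_image_of_mem e (Finset.mem_univ j),
        σ.mem_of_fracDeg_eq_one hj (he j)⟩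
  calc edgeCoverNumber G ≤ (Finset.univ.image e).card := Nat.sInf_le ⟨_, hcover, rfl⟩
    _ ≤ δ := Finset.card_image_le.trans (by simp)

lemma expAtkUtil_eq_zero_of_defenseRatio_eq_one (h : σ.defenseRatio = 1) (a : Fin α) :
    σ.expAtkUtil a = 0 := by
  have hS : ∑ d, σ.expDefUtil d ≠ 0 := by
    intro hS
    simp [defenseRatio, hS] at h
  rw [defenseRatio, div_eq_one_iff_eq hS] at h
  have hsum : ∑ a, σ.expAtkUtil a = 0 := by
    linarith [σ.sum_expDefUtil_add_sum_expAtkUtil]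
  exact (Finset.sum_eq_zero_iff_of_nonneg fun a _ => σ.expAtkUtil_nonneg a).1 hsum a
    (Finset.mem_univ a)

end MixedProfile

theorem no_defense_optimal_many_defenders_general (G : SimpleGraph V) (α δ : ℕ)
    (hlow : (Fintype.card V : ℝ) / 2 < (δ : ℝ)) (hhigh : δ < edgeCoverNumber G) :
    ¬ ∃ σ : MixedProfile G α δ, σ.IsNash ∧
        σ.defenseRatio = max 1 ((Fintype.card V : ℝ) / (2 * δ)) := by
  rintro ⟨σ, hnash, hopt⟩
  have hδ : (0 : ℝ) < δ := lt_of_le_of_lt (by positivity) hlow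
  have hone : max 1 ((Fintype.card V : ℝ) / (2 * δ)) = 1 :=
    max_eq_left <| by rw [div_le_one (by positivity)]; linarith
  rw [hone] at hopt
  have hα : α ≠ 0 := by
    rintro rfl
    simp [defenseRatio] at hopt
  have hcaught := σ.expAtkUtil_eq_zero_of_defenseRatio_eq_one hopt ⟨0, Nat.pos_of_ne_zero hα⟩
  exact (σ.edgeCoverNumber_le_of_forall_hitProb_eq_one (hnash.hitProb_eq_one hcaught)).not_gt
    hhigh

/-- assume `|V|/2 < δ < β'(G)`. Then `AD_{α,δ}(G)` has no Defense-Optimal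
Nash equilibrium, i.e. no Nash equilibrium `σ` with `DR_σ = max {1, |V|/(2δ)}`. -/
theorem no_defense_optimal_many_defenders (G : SimpleGraph V)
    (hG : ∀ v : V, ∃ u, G.Adj u v) (α δ : ℕ) (hα : 1 ≤ α) (hδ : 1 ≤ δ)
    (hlow : (Fintype.card V : ℝ) / 2 < (δ : ℝ)) (hhigh : δ < edgeCoverNumber G) :
    ¬ ∃ σ : MixedProfile G α δ, σ.IsNash ∧
        σ.defenseRatio = max 1 ((Fintype.card V : ℝ) / (2 * δ)) :=
  no_defense_optimal_many_defenders_general G α δ hlow hhigh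
end
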